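/- arXiv:1506.04033 — 3 statements merged into one kernel-verified Lean document; each statement's English description precedes it below -/
import Mathlib

section
/- Let d ≥ 2 and ℓ ≥ 0 be integers. The dimension over ℝ of the vector space of homogeneous polynomials P of degree ℓ in d real variables satisfying ΔP = 0 (where Δ = ∑_{i=1}^d ∂²/∂x_i² is the polynomial Laplacian) equals C(ℓ+d-1, d-1) − C(ℓ+d-3, d-1), where C(n,k) denotes the binomial coefficient and C(ℓ+d-3, d-1) is taken to be 0 when ℓ+d-3 < d-1. -/
open MvPolynomial Finsupp

/-- The polynomial Laplacian `ΔP = ∑ i, ∂²P/∂x_i²` on `d`-variate polynomials,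
as a linear map. -/
noncomputable def polyLaplacian (d : ℕ) :
    MvPolynomial (Fin d) ℝ →ₗ[ℝ] MvPolynomial (Fin d) ℝ :=
  ∑ i : Fin d, ((pderiv i).toLinearMap ∘ₗ (pderiv i).toLinearMap)

theorem lap_monomial (d : ℕ) (α : Fin d →₀ ℕ) (c : ℝ) :
    polyLaplacian d (monomial α c) =
      ∑ i : Fin d, monomial (α - single i 2) (c * ((α i) * (α i - 1) : ℕ)) := by
  rw [polyLaplacian, LinearMap.sum_apply]
  refine Finset.sum_congr rfl fun i _ => ?_
  simp only [LinearMap.coe_comp, Function.comp_apply, Derivation.coeFn_coe,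
    LinearMap.coe_mk]
  rw [pderiv_monomial, pderiv_monomial]
  rw [Finsupp.tsub_apply, Finsupp.single_eq_same, tsub_tsub, ← Finsupp.single_add]
  congr 1
  rcases Nat.eq_zero_or_pos (α i) with h | h
  · simp [h]
  · push_cast [Nat.cast_sub h]
    ring

theorem degree_add' {d : ℕ} (a b : Fin d →₀ ℕ) : (a + b).degree = a.degree + b.degree := by
  simp [Finsupp.degree_eq_weight_one, map_add]

theorem degree_single' {d : ℕ} (i : Fin d) (n : ℕ) : (single i n).degree = n := by
  simp [Finsupp.degree_eq_weight_one, Finsupp.weight_apply, Finsupp.sum_single_index]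

theorem two_le_degree {d : ℕ} (α : Fin d →₀ ℕ) {i j : Fin d} (hij : i ≠ j) :
    α i + α j ≤ α.degree := by
  have hle : single j (α j) ≤ α := by rw [Finsupp.single_le_iff]
  have h1 := degree_add' (α - single j (α j)) (single j (α j))
  rw [tsub_add_cancel_of_le hle, degree_single'] at h1
  have h2 : (α - single j (α j)) i = α i := by
    rw [Finsupp.tsub_apply, Finsupp.single_eq_of_ne' (Ne.symm hij)]
    simp
  have := Finsupp.le_degree i (α - single j (α j))
  omega

theorem degree_of_mem_support {d ℓ : ℕ} {P : MvPolynomial (Fin d) ℝ}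
    (hP : P ∈ homogeneousSubmodule (Fin d) ℝ ℓ) {v : Fin d →₀ ℕ}
    (hv : v ∈ P.support) : v.degree = ℓ := by
  rw [mem_homogeneousSubmodule] at hP
  rw [Finsupp.degree_eq_weight_one]
  exact hP (MvPolynomial.mem_support_iff.mp hv)

theorem monomial_term_mem {d ℓ : ℕ} (v : Fin d →₀ ℕ) (hv : v.degree = ℓ) (c : ℝ)
    (i : Fin d) :
    monomial (v - single i 2) (c * ((v i) * (v i - 1) : ℕ)) ∈
      homogeneousSubmodule (Fin d) ℝ (ℓ - 2) := by
  rcases lt_or_ge (v i) 2 with h | h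
  · interval_cases h' : v i <;> simp [h']
  · apply isHomogeneous_monomial
    have hle : single i 2 ≤ v := by
      rw [Finsupp.single_le_iff]; exact h
    have := degree_add' (v - single i 2) (single i 2)
    rw [tsub_add_cancel_of_le hle, hv, degree_single'] at this
    omega

theorem lap_mem {d ℓ : ℕ} {P : MvPolynomial (Fin d) ℝ}
    (hP : P ∈ homogeneousSubmodule (Fin d) ℝ ℓ) :
    polyLaplacian d P ∈ homogeneousSubmodule (Fin d) ℝ (ℓ - 2) := by
  rw [P.as_sum, map_sum]
  refine Submodule.sum_mem _ fun v hv => ?_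
  rw [lap_monomial]
  exact Submodule.sum_mem _ fun i _ =>
    monomial_term_mem v (degree_of_mem_support hP hv) _ i

theorem lap_eq_zero {d ℓ : ℕ} (hℓ : ℓ ≤ 1) {P : MvPolynomial (Fin d) ℝ}
    (hP : P ∈ homogeneousSubmodule (Fin d) ℝ ℓ) :
    polyLaplacian d P = 0 := by
  rw [P.as_sum, map_sum]
  refine Finset.sum_eq_zero fun v hv => ?_
  rw [lap_monomial]
  refine Finset.sum_eq_zero fun i _ => ?_
  have h1 : v i ≤ 1 := by
    have hd := degree_of_mem_support hP hv
    have := Finsupp.le_degree i v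
    omega
  interval_cases h' : v i <;> simp [h']

theorem claim {d : ℕ} (hd : 1 ≤ d) (ℓ : ℕ) :
    ∀ n (α : Fin d →₀ ℕ), α.degree = ℓ → α.degree - α ⟨0, hd⟩ ≤ n →
      monomial α (1 : ℝ) ∈
        Submodule.map (polyLaplacian d) (homogeneousSubmodule (Fin d) ℝ (ℓ + 2)) := by
  intro n
  induction n using Nat.strong_induction_on with
  | _ n IH =>
    intro α hα hn
    set i0 : Fin d := ⟨0, hd⟩ with hi0
    set a : ℕ := α i0 with ha
    set c : ℝ := (((a + 2) * (a + 1) : ℕ) : ℝ)⁻¹ with hc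
    set β : Fin d →₀ ℕ := α + single i0 2 with hβ
    have hβdeg : β.degree = ℓ + 2 := by rw [hβ, degree_add', degree_single', hα]
    have hQmem : (monomial β c : MvPolynomial (Fin d) ℝ) ∈
        homogeneousSubmodule (Fin d) ℝ (ℓ + 2) := isHomogeneous_monomial _ hβdeg
    have hβ0 : β i0 = a + 2 := by
      rw [hβ, Finsupp.add_apply, Finsupp.single_eq_same]
    have hβi : ∀ i, i ≠ i0 → β i = α i := fun i hi => by
      rw [hβ, Finsupp.add_apply, Finsupp.single_eq_of_ne' (Ne.symm hi), add_zero]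
    have hΔ := lap_monomial d β c
    have hterm0 : monomial (β - single i0 2) (c * ((β i0) * (β i0 - 1) : ℕ)) =
        monomial α (1 : ℝ) := by
      rw [hβ0]
      congr 1
      · rw [hβ, add_tsub_cancel_right]
      · rw [hc]
        have : (((a + 2) * (a + 1) : ℕ) : ℝ) ≠ 0 := by positivity
        field_simp
        rw [show a + 2 - 1 = a + 1 by omega]
    have hsplit : polyLaplacian d (monomial β c) = monomial α (1 : ℝ) +
        ∑ i ∈ Finset.univ.erase i0,
          monomial (β - single i 2) (c * ((β i) * (β i - 1) : ℕ)) := by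
      rw [hΔ, ← Finset.add_sum_erase _ _ (Finset.mem_univ i0), hterm0]
    have hrest : ∀ i ∈ Finset.univ.erase i0,
        monomial (β - single i 2) (c * ((β i) * (β i - 1) : ℕ)) ∈
          Submodule.map (polyLaplacian d) (homogeneousSubmodule (Fin d) ℝ (ℓ + 2)) := by
      intro i hi
      have hi' : i ≠ i0 := (Finset.mem_erase.mp hi).1
      rw [hβi i hi']
      rcases lt_or_ge (α i) 2 with h2 | h2
      · interval_cases h' : α i <;> simp [h']
      · have hsle : single i 2 ≤ β := by
          rw [Finsupp.single_le_iff, hβi i hi']; exact h2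
        have hγdeg : (β - single i 2).degree = ℓ := by
          have := degree_add' (β - single i 2) (single i 2)
          rw [tsub_add_cancel_of_le hsle, hβdeg, degree_single'] at this
          omega
        have hγ0 : ((β - single i 2 : Fin d →₀ ℕ)) i0 = a + 2 := by
          rw [Finsupp.tsub_apply, Finsupp.single_eq_of_ne' hi', hβ0]
          simp
        have hbound : α i + a ≤ ℓ := by
          have := two_le_degree α hi'
          omega
        have hmeas : (β - single i 2).degree - ((β - single i 2 : Fin d →₀ ℕ)) i0 ≤
            ℓ - a - 2 := by
          rw [hγdeg, hγ0]; omega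
        have hlt : ℓ - a - 2 < n := by
          have hn' : ℓ - a ≤ n := by rw [← hα]; exact hn
          omega
        have hmem := IH _ hlt _ hγdeg hmeas
        have : (monomial (β - single i 2) (c * ((α i) * (α i - 1) : ℕ)) :
              MvPolynomial (Fin d) ℝ) =
            (c * ((α i) * (α i - 1) : ℕ)) • monomial (β - single i 2) 1 := by
          rw [MvPolynomial.smul_monomial, smul_eq_mul, mul_one]
        rw [this]
        exact Submodule.smul_mem _ _ hmem
    have hQ : polyLaplacian d (monomial β c) ∈
        Submodule.map (polyLaplacian d) (homogeneousSubmodule (Fin d) ℝ (ℓ + 2)) :=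
      ⟨_, hQmem, rfl⟩
    rw [hsplit] at hQ
    have hsum := Submodule.sum_mem _ hrest
    have := Submodule.sub_mem _ hQ hsum
    simpa using this

theorem lap_surj {d : ℕ} (hd : 1 ≤ d) (ℓ : ℕ) :
    homogeneousSubmodule (Fin d) ℝ ℓ ≤
      Submodule.map (polyLaplacian d) (homogeneousSubmodule (Fin d) ℝ (ℓ + 2)) := by
  intro P hP
  rw [P.as_sum]
  refine Submodule.sum_mem _ fun v hv => ?_
  have hdeg := degree_of_mem_support hP hv
  have h1 := claim hd ℓ (v.degree - v ⟨0, hd⟩) v hdeg le_rfl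
  have : (monomial v (coeff v P) : MvPolynomial (Fin d) ℝ) =
      (coeff v P) • monomial v 1 := by
    rw [MvPolynomial.smul_monomial, smul_eq_mul, mul_one]
  rw [this]
  exact Submodule.smul_mem _ _ h1

noncomputable def degEquiv (d ℓ : ℕ) : Sym (Fin d) ℓ ≃ {a : Fin d →₀ ℕ | a.degree = ℓ} where
  toFun := fun m => ⟨Multiset.toFinsupp m.1, by
    simp [Finsupp.degree_apply, ← Finsupp.card_toMultiset, Finsupp.sum, m.2]⟩
  invFun := fun a => ⟨Finsupp.toMultiset a.1, by
    rw [Finsupp.card_toMultiset]; exact a.2⟩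
  left_inv := fun m => Subtype.ext (by simp)
  right_inv := fun a => Subtype.ext (by simp)

noncomputable instance degFintype (d ℓ : ℕ) :
    Fintype {a : Fin d →₀ ℕ | a.degree = ℓ} :=
  Fintype.ofEquiv _ (degEquiv d ℓ)

set_option maxHeartbeats 1000000 in
theorem finrank_homog (d ℓ : ℕ) :
    Module.finrank ℝ ↥(homogeneousSubmodule (Fin d) ℝ ℓ) = (d + ℓ - 1).choose ℓ := by
  rw [homogeneousSubmodule_eq_finsupp_supported]
  rw [LinearEquiv.finrank_eq (AddMonoidAlgebra.supportedEquivFinsupp _),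
    Module.finrank_finsupp_self]
  rw [← Nat.multichoose_eq, Fintype.card_congr (degEquiv d ℓ).symm,
    Sym.card_sym_eq_multichoose, Fintype.card_fin]

set_option maxHeartbeats 1000000 in
instance homog_fd (d ℓ : ℕ) :
    FiniteDimensional ℝ ↥(homogeneousSubmodule (Fin d) ℝ ℓ) := by
  rw [homogeneousSubmodule_eq_finsupp_supported]
  exact Module.Finite.equiv (AddMonoidAlgebra.supportedEquivFinsupp
    {a : Fin d →₀ ℕ | a.degree = ℓ}).symm

/-- Kernel of the restriction of a linear map is equivalent to the intersection
of the domain submodule with the kernel. -/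
noncomputable def kerRestrictEquiv {M : Type*} [AddCommGroup M] [Module ℝ M]
    (g : M →ₗ[ℝ] M) (p q : Submodule ℝ M) (h : ∀ x ∈ p, g x ∈ q) :
    ↥(p ⊓ LinearMap.ker g) ≃ₗ[ℝ] ↥(LinearMap.ker (g.restrict h)) where
  toFun := fun x => ⟨⟨x.1, x.2.1⟩, by
    have hx : g x.1 = 0 := x.2.2
    exact Subtype.ext (by simpa [LinearMap.restrict_apply] using hx)⟩
  invFun := fun y => ⟨y.1.1, ⟨y.1.2, by
    have h0 : (g.restrict h) y.1 = 0 := y.2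
    have h1 : g y.1.1 = ((g.restrict h) y.1 : M) := rfl
    rw [h0] at h1
    simpa using h1⟩⟩
  map_add' := fun x y => rfl
  map_smul' := fun c x => rfl
  left_inv := fun x => rfl
  right_inv := fun y => rfl

set_option maxHeartbeats 1000000 in
set_option synthInstance.maxHeartbeats 400000 in
theorem dim_harmonic_homogeneous (d ℓ : ℕ) (hd : 2 ≤ d) :
    Module.finrank ℝ
      ↥(homogeneousSubmodule (Fin d) ℝ ℓ ⊓ LinearMap.ker (polyLaplacian d)) =
      (ℓ + d - 1).choose (d - 1) - (ℓ + d - 3).choose (d - 1) := by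
  have hd1 : 1 ≤ d := by omega
  rcases Nat.lt_or_ge ℓ 2 with hℓ | hℓ
  · -- low degree: Laplacian vanishes on S ℓ
    have hle : homogeneousSubmodule (Fin d) ℝ ℓ ≤ LinearMap.ker (polyLaplacian d) :=
      fun P hP => LinearMap.mem_ker.mpr (lap_eq_zero (by omega) hP)
    rw [inf_eq_left.mpr hle, finrank_homog]
    rw [Nat.choose_eq_zero_of_lt (by omega : ℓ + d - 3 < d - 1), Nat.sub_zero]
    rw [← Nat.choose_symm (by omega : d - 1 ≤ ℓ + d - 1)]
    congr 1 <;> omega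
  · obtain ⟨m, rfl⟩ : ∃ m, ℓ = m + 2 := ⟨ℓ - 2, by omega⟩
    have hmap : ∀ P ∈ homogeneousSubmodule (Fin d) ℝ (m + 2),
        polyLaplacian d P ∈ homogeneousSubmodule (Fin d) ℝ m := fun P hP => by
      simpa using lap_mem hP
    have hsurj : Function.Surjective ((polyLaplacian d).restrict hmap) := by
      rintro ⟨y, hy⟩
      obtain ⟨x, hx, hxy⟩ := lap_surj hd1 m hy
      refine ⟨⟨x, hx⟩, Subtype.ext ?_⟩
      simpa [LinearMap.restrict_apply] using hxy
    have hrank :=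
      LinearMap.finrank_range_add_finrank_ker ((polyLaplacian d).restrict hmap)
    rw [LinearMap.range_eq_top.mpr hsurj, finrank_top] at hrank
    have hker : Module.finrank ℝ
        ↥(homogeneousSubmodule (Fin d) ℝ (m + 2) ⊓ LinearMap.ker (polyLaplacian d)) =
        Module.finrank ℝ ↥(LinearMap.ker ((polyLaplacian d).restrict hmap)) :=
      LinearEquiv.finrank_eq (kerRestrictEquiv (polyLaplacian d) _ _ hmap)
    rw [hker]
    have h1 := finrank_homog d (m + 2)
    have h2 := finrank_homog d m
    have e1 : (m + 2 + d - 1).choose (d - 1) = (d + (m + 2) - 1).choose (m + 2) := by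
      rw [← Nat.choose_symm (by omega : d - 1 ≤ m + 2 + d - 1)]
      congr 1 <;> omega
    have e2 : (m + 2 + d - 3).choose (d - 1) = (d + m - 1).choose m := by
      rw [← Nat.choose_symm (by omega : d - 1 ≤ m + 2 + d - 3)]
      congr 1 <;> omega
    rw [e1, e2]
    omega
end

section
/- Let d ≥ 2 be an integer. Then sInf {r > 0 | (Ξ_1^{(d)})'(r) = 0} < sInf {r > 0 | (Ξ_0^{(d)})'(r) = 0}; that is, the smallest positive zero β_{1,1} of the derivative of Ξ_1^{(d)} is strictly smaller than the smallest positive zero β_{0,2} of the derivative of Ξ_0^{(d)}. (Consequently, for the Neumann Laplacian in the unit ball of ℝ^d, λ_{1,1}^N < λ_{0,2}^N.) -/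
/-- The Bessel function of the first kind `J_ν`, defined for real order `ν`
by its power series (interpreted with real powers `(x/2)^(2k+ν)`). -/
noncomputable def besselJ (ν x : ℝ) : ℝ :=
  ∑' k : ℕ, (-1 : ℝ) ^ k / (k.factorial * Real.Gamma ((k : ℝ) + ν + 1)) *
    (x / 2) ^ (2 * (k : ℝ) + ν)

/-- `Ξ_ℓ^{(d)}(r) = r^{(2-d)/2} J_{ℓ + d/2 - 1}(r)`. -/
noncomputable def Xi (d ℓ : ℕ) (r : ℝ) : ℝ :=
  r ^ (((2 : ℝ) - d) / 2) * besselJ ((ℓ : ℝ) + (d : ℝ) / 2 - 1) r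

open Real Set Filter Topology

namespace BesselAux

/-- coefficients of `f ν (y) = ∑ a ν k * y^k`, where `besselJ ν x = x^ν f ν (x²)`. -/
noncomputable def a (ν : ℝ) (k : ℕ) : ℝ :=
  (-1 : ℝ) ^ k / (k.factorial * Real.Gamma ((k : ℝ) + ν + 1) * (2:ℝ) ^ (2 * (k : ℝ) + ν))

noncomputable def f (ν : ℝ) (y : ℝ) : ℝ := ∑' k : ℕ, a ν k * y ^ k

lemma gamma_pos (ν : ℝ) (hν : 0 ≤ ν) (k : ℕ) : 0 < Real.Gamma ((k : ℝ) + ν + 1) :=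
  Real.Gamma_pos_of_pos (by positivity)

lemma two_rpow_pos (p : ℝ) : 0 < (2:ℝ) ^ p := Real.rpow_pos_of_pos (by norm_num) p

lemma a_pos_zero (ν : ℝ) (hν : 0 ≤ ν) : 0 < a ν 0 := by
  unfold a
  have := gamma_pos ν hν 0
  have := two_rpow_pos (2 * ((0:ℕ):ℝ) + ν)
  simp only [pow_zero, Nat.factorial_zero, Nat.cast_one, one_mul]
  positivity

lemma a_ne_zero (ν : ℝ) (hν : 0 ≤ ν) (k : ℕ) : a ν k ≠ 0 := by
  unfold a
  have h1 := gamma_pos ν hν k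
  have h2 := two_rpow_pos (2 * (k:ℝ) + ν)
  have h3 : (k.factorial : ℝ) ≠ 0 := Nat.cast_ne_zero.2 k.factorial_ne_zero
  have h4 : ((-1:ℝ)) ^ k ≠ 0 := by
    rcases Int.even_or_odd k with h | h
    all_goals simp [pow_ne_zero]
  positivity

lemma gamma_succ_arg (ν : ℝ) (hν : 0 ≤ ν) (k : ℕ) :
    Real.Gamma (((k:ℝ) + 1) + ν + 1) = ((k:ℝ) + ν + 1) * Real.Gamma ((k:ℝ) + ν + 1) := by
  have h : ((k:ℝ) + 1) + ν + 1 = ((k:ℝ) + ν + 1) + 1 := by ring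
  rw [h, Real.Gamma_add_one (by positivity)]

lemma rpow_two_shift (p : ℝ) : (2:ℝ) ^ (p + 2) = (2:ℝ) ^ p * 4 := by
  rw [Real.rpow_add (by norm_num : (0:ℝ) < 2),
    show ((2:ℝ)) = ((2:ℕ):ℝ) from by norm_num, Real.rpow_natCast]
  norm_num

lemma rpow_one_shift (p : ℝ) : (2:ℝ) ^ (p + 1) = (2:ℝ) ^ p * 2 := by
  rw [Real.rpow_add (by norm_num : (0:ℝ) < 2)]
  norm_num

lemma a_succ (ν : ℝ) (hν : 0 ≤ ν) (k : ℕ) :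
    a ν (k + 1) = -a ν k / (4 * ((k:ℝ) + 1) * ((k:ℝ) + ν + 1)) := by
  unfold a
  have hcast : (((k+1:ℕ)):ℝ) = (k:ℝ) + 1 := by push_cast; ring
  have hfac : (((k+1).factorial : ℕ):ℝ) = ((k:ℝ) + 1) * (k.factorial : ℝ) := by
    rw [Nat.factorial_succ]; push_cast; ring
  have hexp : 2 * (((k+1:ℕ)):ℝ) + ν = (2 * (k:ℝ) + ν) + 2 := by push_cast; ring
  rw [hexp, rpow_two_shift]
  rw [hfac]
  rw [show (((k+1:ℕ)):ℝ) + ν + 1 = ((k:ℝ)+1) + ν + 1 by push_cast; ring]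
  rw [gamma_succ_arg ν hν k]
  have h1 := gamma_pos ν hν k
  have h2 := two_rpow_pos (2 * (k:ℝ) + ν)
  have h3 : (k.factorial : ℝ) ≠ 0 := Nat.cast_ne_zero.2 k.factorial_ne_zero
  have h4 : (k:ℝ) + 1 ≠ 0 := by positivity
  have h5 : (k:ℝ) + ν + 1 ≠ 0 := by positivity
  rw [pow_succ]
  field_simp

lemma a_nu_succ (ν : ℝ) (hν : 0 ≤ ν) (k : ℕ) :
    a (ν + 1) k = a ν k / (2 * ((k:ℝ) + ν + 1)) := by
  unfold a
  have hexp : 2 * ((k:ℕ):ℝ) + (ν + 1) = (2 * (k:ℝ) + ν) + 1 := by ring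
  rw [hexp, rpow_one_shift]
  rw [show ((k:ℕ):ℝ) + (ν + 1) + 1 = ((k:ℝ)+1) + ν + 1 by ring]
  rw [gamma_succ_arg ν hν k]
  have h1 := gamma_pos ν hν k
  have h2 := two_rpow_pos (2 * (k:ℝ) + ν)
  have h3 : (k.factorial : ℝ) ≠ 0 := Nat.cast_ne_zero.2 k.factorial_ne_zero
  have h5 : (k:ℝ) + ν + 1 ≠ 0 := by positivity
  field_simp

lemma a_shift (ν : ℝ) (hν : 0 ≤ ν) (k : ℕ) :
    a (ν + 1) k = -(2 * ((k:ℝ) + 1)) * a ν (k + 1) := by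
  rw [a_succ ν hν k, a_nu_succ ν hν k]
  have h4 : (k:ℝ) + 1 ≠ 0 := by positivity
  have h5 : (k:ℝ) + ν + 1 ≠ 0 := by positivity
  field_simp
  ring

lemma abs_a_succ_le (ν : ℝ) (hν : 0 ≤ ν) (k : ℕ) :
    |a ν (k + 1)| ≤ |a ν k| / (4 * ((k:ℝ) + 1)) := by
  rw [a_succ ν hν k]
  rw [abs_div, abs_neg]
  have h5 : (1:ℝ) ≤ (k:ℝ) + ν + 1 := by
    have : (0:ℝ) ≤ (k:ℝ) := Nat.cast_nonneg k
    linarith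
  have h6 : (0:ℝ) < 4 * ((k:ℝ) + 1) := by positivity
  have h7 : |4 * ((k:ℝ) + 1) * ((k:ℝ) + ν + 1)| = 4 * ((k:ℝ) + 1) * ((k:ℝ) + ν + 1) := by
    rw [abs_of_pos]; nlinarith
  rw [h7]
  apply div_le_div_of_nonneg_left (abs_nonneg _) h6
  nlinarith

lemma abs_a_le (ν : ℝ) (hν : 0 ≤ ν) (k : ℕ) :
    |a ν k| ≤ |a ν 0| * (1/4) ^ k / k.factorial := by
  induction k with
  | zero => simp
  | succ k ih =>
    calc |a ν (k+1)| ≤ |a ν k| / (4 * ((k:ℝ) + 1)) := abs_a_succ_le ν hν k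
    _ ≤ (|a ν 0| * (1/4) ^ k / k.factorial) / (4 * ((k:ℝ) + 1)) := by
        have h6 : (0:ℝ) < 4 * ((k:ℝ) + 1) := by positivity
        gcongr
    _ = |a ν 0| * (1/4) ^ (k+1) / (k+1).factorial := by
        have h6 : (0:ℝ) < (k.factorial:ℝ) := Nat.cast_pos.2 k.factorial_pos
        rw [Nat.factorial_succ, pow_succ]
        push_cast
        rw [div_div, div_eq_div_iff (by positivity) (by positivity)]
        ring

lemma summable_abs_weight (ν : ℝ) (hν : 0 ≤ ν) (R : ℝ) (hR : 0 ≤ R) :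
    Summable (fun k : ℕ => |a ν k| * R ^ k) := by
  refine Summable.of_nonneg_of_le (fun k => by positivity) ?_
    ((Real.summable_pow_div_factorial (R/4)).mul_left |a ν 0|)
  · intro k
    calc |a ν k| * R ^ k ≤ (|a ν 0| * (1/4) ^ k / k.factorial) * R ^ k := by
          apply mul_le_mul_of_nonneg_right (abs_a_le ν hν k) (by positivity)
    _ = |a ν 0| * ((R/4) ^ k / k.factorial) := by
        rw [div_pow, div_pow]
        have h3 : (k.factorial : ℝ) ≠ 0 := Nat.cast_ne_zero.2 k.factorial_ne_zero
        field_simp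
        ring

lemma summable_k_weight (ν : ℝ) (hν : 0 ≤ ν) (R : ℝ) (hR : 0 ≤ R) :
    Summable (fun k : ℕ => (k:ℝ) * |a ν k| * R ^ k) := by
  refine Summable.of_nonneg_of_le (fun k => by positivity) ?_
    ((Real.summable_pow_div_factorial (R/2)).mul_left |a ν 0|)
  · intro k
    have hk2 : (k:ℝ) ≤ 2 ^ k := by
      exact_mod_cast (Nat.lt_two_pow_self (n := k)).le
    calc (k:ℝ) * |a ν k| * R ^ k ≤ 2 ^ k * (|a ν 0| * (1/4) ^ k / k.factorial) * R ^ k := by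
          apply mul_le_mul_of_nonneg_right _ (by positivity)
          apply mul_le_mul hk2 (abs_a_le ν hν k) (abs_nonneg _) (by positivity)
    _ = |a ν 0| * ((R/2) ^ k / k.factorial) := by
        rw [div_pow, div_pow]
        have h3 : (k.factorial : ℝ) ≠ 0 := Nat.cast_ne_zero.2 k.factorial_ne_zero
        have : (4:ℝ) ^ k = 2 ^ k * 2 ^ k := by
          rw [← mul_pow]; norm_num
        field_simp [this]
        rw [this]; ring

lemma summable_f (ν : ℝ) (hν : 0 ≤ ν) (y : ℝ) :
    Summable (fun k : ℕ => a ν k * y ^ k) := by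
  apply Summable.of_norm_bounded (summable_abs_weight ν hν |y| (abs_nonneg y))
  intro k
  rw [norm_mul, norm_pow]
  simp [abs_abs]

lemma f_hasDerivAt (ν : ℝ) (hν : 0 ≤ ν) (y : ℝ) :
    HasDerivAt (f ν) (-(1/2) * f (ν+1) y) y := by
  have hR1 : (1:ℝ) ≤ |y| + 1 := le_add_of_nonneg_left (abs_nonneg y)
  have hR0 : (0:ℝ) ≤ |y| + 1 := by linarith
  set R : ℝ := |y| + 1 with hRdef
  have hu : Summable (fun k : ℕ => (k:ℝ) * |a ν k| * R ^ k) := summable_k_weight ν hν R hR0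
  have hbound : ∀ (n : ℕ) (x : ℝ), x ∈ Metric.ball (0:ℝ) R →
      ‖(n:ℝ) * a ν n * x ^ (n-1)‖ ≤ (n:ℝ) * |a ν n| * R ^ n := by
    intro n x hx
    rw [Metric.mem_ball, Real.dist_eq, sub_zero] at hx
    rw [norm_mul, norm_mul, norm_pow]
    simp only [Real.norm_eq_abs, abs_abs, Nat.abs_cast]
    apply mul_le_mul_of_nonneg_left _ (by positivity)
    calc |x| ^ (n-1) ≤ R ^ (n-1) := pow_le_pow_left₀ (abs_nonneg x) hx.le _
    _ ≤ R ^ n := pow_le_pow_right₀ hR1 (Nat.sub_le n 1)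
  have key : HasDerivAt (fun z : ℝ => ∑' k : ℕ, a ν k * z ^ k)
      (∑' k : ℕ, (k:ℝ) * a ν k * y ^ (k-1)) y := by
    apply hasDerivAt_tsum_of_isPreconnected hu Metric.isOpen_ball
      (convex_ball (0:ℝ) R).isPreconnected
      (g := fun (k : ℕ) (x : ℝ) => a ν k * x ^ k)
      (g' := fun (k : ℕ) (x : ℝ) => (k:ℝ) * a ν k * x ^ (k-1))
      (y₀ := 0)
    · intro n x hx
      have := (hasDerivAt_pow n x).const_mul (a ν n)
      refine this.congr_deriv ?_
      ring
    · exact hbound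
    · simp [Metric.mem_ball, hR0, lt_of_lt_of_le one_pos hR1]
    · exact summable_f ν hν 0
    · rw [Metric.mem_ball, Real.dist_eq, sub_zero]
      simp [hRdef]
  have hsum : Summable (fun k : ℕ => (k:ℝ) * a ν k * y ^ (k-1)) := by
    apply Summable.of_norm_bounded hu
    intro k
    apply hbound
    rw [Metric.mem_ball, Real.dist_eq, sub_zero]
    simp [hRdef]
  have heq : (∑' k : ℕ, (k:ℝ) * a ν k * y ^ (k-1)) = -(1/2) * f (ν+1) y := by
    rw [hsum.tsum_eq_zero_add]
    simp only [Nat.cast_zero, zero_mul, zero_add, Nat.cast_add, Nat.cast_one,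
      Nat.add_sub_cancel]
    have : ∀ k : ℕ, ((k:ℝ) + 1) * a ν (k+1) * y ^ k = -(1/2) * (a (ν+1) k * y ^ k) := by
      intro k
      rw [a_shift ν hν k]
      ring
    rw [tsum_congr this, tsum_mul_left]
    rfl
  rw [← heq]
  exact key

lemma f_continuous (ν : ℝ) (hν : 0 ≤ ν) : Continuous (f ν) := by
  rw [continuous_iff_continuousAt]
  exact fun y => (f_hasDerivAt ν hν y).continuousAt

lemma a_zero_rel (ν : ℝ) (hν : 0 ≤ ν) : a ν 0 = 2 * (ν + 1) * a (ν + 1) 0 := by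
  rw [a_nu_succ ν hν 0]
  have : ((0:ℕ):ℝ) + ν + 1 = ν + 1 := by push_cast; ring
  rw [this]
  have h : ν + 1 ≠ 0 := by positivity
  field_simp

lemma coef_id (ν : ℝ) (hν : 0 ≤ ν) (k : ℕ) :
    a ν (k+1) - 2 * (ν + 1) * a (ν + 1) (k+1) = - a (ν + 2) k := by
  have e1 : a (ν + 2) k = -(2 * ((k:ℝ) + 1)) * a (ν + 1) (k + 1) := by
    have := a_shift (ν + 1) (by linarith) k
    rw [show ν + 1 + 1 = ν + 2 by ring] at this
    exact this
  have e2 : a (ν + 1) k = -(2 * ((k:ℝ) + 1)) * a ν (k + 1) := a_shift ν hν k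
  have e3 : a (ν + 1) (k+1) = -a (ν+1) k / (4 * ((k:ℝ) + 1) * ((k:ℝ) + (ν+1) + 1)) :=
    a_succ (ν+1) (by linarith) k
  have h4 : (k:ℝ) + 1 ≠ 0 := by positivity
  have h5 : (k:ℝ) + ν + 2 ≠ 0 := by positivity
  rw [e1, e3, show (k:ℝ) + (ν+1) + 1 = (k:ℝ) + ν + 2 by ring]
  have e2' : a ν (k+1) = -(a (ν + 1) k) / (2 * ((k:ℝ) + 1)) := by
    rw [e2]; field_simp
  rw [e2']
  field_simp
  ring

lemma f_ode (ν : ℝ) (hν : 0 ≤ ν) (y : ℝ) :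
    f ν y - 2 * (ν + 1) * f (ν + 1) y = -(y * f (ν + 2) y) := by
  have s1 : Summable (fun k : ℕ => a ν k * y ^ k) := summable_f ν hν y
  have s2 : Summable (fun k : ℕ => a (ν+1) k * y ^ k) := summable_f (ν+1) (by linarith) y
  have s2' : Summable (fun k : ℕ => 2 * (ν + 1) * (a (ν+1) k * y ^ k)) := s2.mul_left _
  have scomb : Summable (fun k : ℕ => (a ν k - 2 * (ν + 1) * a (ν + 1) k) * y ^ k) := by
    have : (fun k : ℕ => (a ν k - 2 * (ν + 1) * a (ν + 1) k) * y ^ k)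
        = fun k : ℕ => a ν k * y ^ k - 2 * (ν + 1) * (a (ν+1) k * y ^ k) := by
      funext k; ring
    rw [this]
    exact s1.sub s2'
  have hL : f ν y - 2 * (ν + 1) * f (ν + 1) y
      = ∑' k : ℕ, (a ν k - 2 * (ν + 1) * a (ν + 1) k) * y ^ k := by
    have : (fun k : ℕ => (a ν k - 2 * (ν + 1) * a (ν + 1) k) * y ^ k)
        = fun k : ℕ => a ν k * y ^ k - 2 * (ν + 1) * (a (ν+1) k * y ^ k) := by
      funext k; ring
    rw [this, s1.tsum_sub s2', tsum_mul_left]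
    rfl
  rw [hL, scomb.tsum_eq_zero_add]
  have h0 : (a ν 0 - 2 * (ν + 1) * a (ν + 1) 0) * y ^ 0 = 0 := by
    rw [a_zero_rel ν hν]; ring
  rw [h0, zero_add]
  have hterm : ∀ k : ℕ, (a ν (k+1) - 2 * (ν + 1) * a (ν + 1) (k+1)) * y ^ (k+1)
      = -(y * (a (ν + 2) k * y ^ k)) := by
    intro k
    rw [coef_id ν hν k]
    ring
  rw [tsum_congr hterm, tsum_neg, tsum_mul_left]
  rfl

lemma f_zero_val (ν : ℝ) (hν : 0 ≤ ν) : f ν 0 = a ν 0 := by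
  unfold f
  rw [tsum_eq_single 0]
  · simp
  · intro k hk
    simp [zero_pow hk]

lemma besselJ_eq (ν : ℝ) (hν : 0 ≤ ν) {x : ℝ} (hx : 0 < x) :
    besselJ ν x = x ^ ν * f ν (x ^ 2) := by
  unfold besselJ f
  rw [← tsum_mul_left]
  refine tsum_congr fun k => ?_
  have h2 : (x/2) ^ (2*(k:ℝ)+ν) = x ^ (2*(k:ℝ)+ν) / (2:ℝ) ^ (2*(k:ℝ)+ν) :=
    Real.div_rpow hx.le (by norm_num) _
  have h3 : x ^ (2*(k:ℝ)+ν) = (x^2) ^ k * x ^ ν := by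
    rw [Real.rpow_add hx]
    congr 1
    rw [show (2*(k:ℝ)) = ((2*k : ℕ):ℝ) by push_cast; ring, Real.rpow_natCast, pow_mul]
  rw [h2, h3]
  unfold a
  have h1 := gamma_pos ν hν k
  have h2' := two_rpow_pos (2 * (k:ℝ) + ν)
  have h3' : (k.factorial : ℝ) ≠ 0 := Nat.cast_ne_zero.2 k.factorial_ne_zero
  field_simp

lemma fsq_hasDerivAt (ν : ℝ) (hν : 0 ≤ ν) (x : ℝ) :
    HasDerivAt (fun t : ℝ => f ν (t ^ 2)) (-x * f (ν + 1) (x ^ 2)) x := by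
  have h := (f_hasDerivAt ν hν (x ^ 2)).comp x ((hasDerivAt_pow 2 x))
  refine h.congr_deriv ?_
  simp
  ring

lemma G_hasDerivAt (μ ω A : ℝ) (hμ : 1 ≤ μ) {x : ℝ} (hx : 0 < x) :
    HasDerivAt (fun t : ℝ => t ^ (2*μ+1) *
      ((-t * f (μ+1) (t^2)) * (t ^ (-(μ+1/2)) * Real.sin (ω*(t-A)))
        - f μ (t^2) * (-(μ+1/2) * t ^ (-(μ+1/2)-1) * Real.sin (ω*(t-A))
            + t ^ (-(μ+1/2)) * (Real.cos (ω*(t-A)) * ω))))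
      (-(f μ (x^2)) * (x ^ (-(μ+1/2)) * Real.sin (ω*(x-A))) * x ^ (2*μ+1)
        * (1 - ω^2 - (μ^2 - 1/4)/x^2)) x := by
  have hμ0 : (0:ℝ) ≤ μ := by linarith
  have hμ1 : (0:ℝ) ≤ μ + 1 := by linarith
  have hxne : x ≠ 0 := hx.ne'
  have hlin : HasDerivAt (fun t : ℝ => ω*(t-A)) ω x := by
    simpa using ((hasDerivAt_id x).sub_const A).const_mul ω
  have hsin : HasDerivAt (fun t : ℝ => Real.sin (ω*(t-A))) (Real.cos (ω*(x-A)) * ω) x :=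
    hlin.sin
  have hcos : HasDerivAt (fun t : ℝ => Real.cos (ω*(t-A))) (-Real.sin (ω*(x-A)) * ω) x :=
    hlin.cos
  have hq : HasDerivAt (fun t : ℝ => t ^ (-(μ+1/2)))
      ((-(μ+1/2)) * x ^ (-(μ+1/2)-1)) x := Real.hasDerivAt_rpow_const (Or.inl hxne)
  have hq1 : HasDerivAt (fun t : ℝ => t ^ (-(μ+1/2)-1))
      ((-(μ+1/2)-1) * x ^ (-(μ+1/2)-1-1)) x := Real.hasDerivAt_rpow_const (Or.inl hxne)
  have hrho : HasDerivAt (fun t : ℝ => t ^ (2*μ+1))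
      ((2*μ+1) * x ^ (2*μ+1-1)) x := Real.hasDerivAt_rpow_const (Or.inl hxne)
  have hh : HasDerivAt (fun t : ℝ => f μ (t^2)) (-x * f (μ+1) (x^2)) x :=
    fsq_hasDerivAt μ hμ0 x
  have hF : HasDerivAt (fun t : ℝ => f (μ+1) (t^2)) (-x * f (μ+2) (x^2)) x := by
    have := fsq_hasDerivAt (μ+1) hμ1 x
    rwa [show μ+1+1 = μ+2 by ring] at this
  have hid : HasDerivAt (fun t : ℝ => -t) (-1 : ℝ) x := (hasDerivAt_id x).neg
  have hHd : HasDerivAt (fun t : ℝ => -t * f (μ+1) (t^2))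
      (-1 * f (μ+1) (x^2) + -x * (-x * f (μ+2) (x^2))) x := hid.mul hF
  have hv : HasDerivAt (fun t : ℝ => t ^ (-(μ+1/2)) * Real.sin (ω*(t-A)))
      ((-(μ+1/2)) * x ^ (-(μ+1/2)-1) * Real.sin (ω*(x-A))
        + x ^ (-(μ+1/2)) * (Real.cos (ω*(x-A)) * ω)) x := hq.mul hsin
  have hvd1 : HasDerivAt (fun t : ℝ => -(μ+1/2) * t ^ (-(μ+1/2)-1) * Real.sin (ω*(t-A)))
      ((-(μ+1/2) * ((-(μ+1/2)-1) * x ^ (-(μ+1/2)-1-1))) * Real.sin (ω*(x-A))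
        + (-(μ+1/2) * x ^ (-(μ+1/2)-1)) * (Real.cos (ω*(x-A)) * ω)) x := by
    exact (hq1.const_mul (-(μ+1/2))).mul hsin
  have hvd2 : HasDerivAt (fun t : ℝ => t ^ (-(μ+1/2)) * (Real.cos (ω*(t-A)) * ω))
      ((-(μ+1/2)) * x ^ (-(μ+1/2)-1) * (Real.cos (ω*(x-A)) * ω)
        + x ^ (-(μ+1/2)) * (-Real.sin (ω*(x-A)) * ω * ω)) x := hq.mul (hcos.mul_const ω)
  have hvd := hvd1.add hvd2
  have hW := (hHd.mul hv).sub (hh.mul hvd)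
  have hG := hrho.mul hW
  refine hG.congr_deriv ?_
  simp only [Pi.mul_apply, Pi.add_apply, Pi.sub_apply]
  have e1 : x ^ (2*μ+1-1) = x ^ (2*μ+1) / x := Real.rpow_sub_one hxne _
  have e2 : x ^ (-(μ+1/2)-1) = x ^ (-(μ+1/2)) / x := Real.rpow_sub_one hxne _
  have e3 : x ^ (-(μ+1/2)-1-1) = x ^ (-(μ+1/2)) / x / x := by
    rw [Real.rpow_sub_one hxne, e2]
  have hy : (x:ℝ)^2 ≠ 0 := pow_ne_zero 2 hxne
  have ode : f (μ+2) (x^2) = (2*(μ+1) * f (μ+1) (x^2) - f μ (x^2)) / x^2 := by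
    have h := f_ode μ hμ0 (x^2)
    field_simp
    linarith [h]
  rw [e1, e2, e3, ode]
  field_simp
  ring

lemma exists_fzero (μ : ℝ) (hμ : 1 ≤ μ) : ∃ z : ℝ, 0 < z ∧ f μ (z ^ 2) = 0 := by
  by_contra hcon
  push_neg at hcon
  have hμ0 : (0:ℝ) ≤ μ := by linarith
  have hcont : Continuous (fun t : ℝ => f μ (t^2)) :=
    (f_continuous μ hμ0).comp (continuous_pow 2)
  have h00 : 0 < f μ ((0:ℝ)^2) := by
    rw [show ((0:ℝ)^2) = 0 by norm_num, f_zero_val μ hμ0]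
    exact a_pos_zero μ hμ0
  have hpos : ∀ x : ℝ, 0 ≤ x → 0 < f μ (x^2) := by
    intro x hx0
    rcases eq_or_lt_of_le hx0 with h | h
    · rw [← h]; exact h00
    · by_contra hle
      push_neg at hle
      have hne := hcon x h
      have hlt : f μ (x^2) < 0 := lt_of_le_of_ne hle hne
      have hIVT := intermediate_value_Ioo' (le_of_lt h)
        (hcont.continuousOn (s := Icc 0 x))
      have h0mem : (0:ℝ) ∈ Ioo (f μ (x^2)) (f μ ((0:ℝ)^2)) := ⟨hlt, h00⟩
      obtain ⟨t, ht, hft⟩ := hIVT h0mem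
      exact hcon t ht.1 hft
  set s2 : ℝ := Real.sqrt 2 with hs2def
  have hs2 : s2 ^ 2 = 2 := Real.sq_sqrt (by norm_num)
  have hs2pos : 0 < s2 := Real.sqrt_pos.2 (by norm_num)
  set ω : ℝ := s2⁻¹ with hωdef
  have hω : 0 < ω := inv_pos.2 hs2pos
  have hω2 : ω ^ 2 = 1/2 := by rw [hωdef, inv_pow, hs2]; norm_num
  set A : ℝ := s2 * μ + 1 with hAdef
  have hA1 : (1:ℝ) ≤ A := by nlinarith
  have hA0 : (0:ℝ) < A := by linarith
  set B : ℝ := A + π * s2 with hBdef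
  have hAB : A < B := by have := Real.pi_pos; nlinarith
  set G : ℝ → ℝ := fun t => t ^ (2*μ+1) *
      ((-t * f (μ+1) (t^2)) * (t ^ (-(μ+1/2)) * Real.sin (ω*(t-A)))
        - f μ (t^2) * (-(μ+1/2) * t ^ (-(μ+1/2)-1) * Real.sin (ω*(t-A))
            + t ^ (-(μ+1/2)) * (Real.cos (ω*(t-A)) * ω))) with hGdef
  have hGderiv : ∀ x : ℝ, 0 < x → HasDerivAt G
      (-(f μ (x^2)) * (x ^ (-(μ+1/2)) * Real.sin (ω*(x-A))) * x ^ (2*μ+1)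
        * (1 - ω^2 - (μ^2 - 1/4)/x^2)) x := by
    intro x hx
    rw [hGdef]
    exact G_hasDerivAt μ ω A hμ hx
  have hmono : AntitoneOn G (Icc A B) := by
    apply antitoneOn_of_deriv_nonpos (convex_Icc A B)
    · intro x hx
      exact (hGderiv x (lt_of_lt_of_le hA0 hx.1)).continuousAt.continuousWithinAt
    · intro x hx
      rw [interior_Icc] at hx
      exact ((hGderiv x (lt_trans hA0 hx.1)).differentiableAt).differentiableWithinAt
    · intro x hx
      rw [interior_Icc] at hx
      have hx0 : 0 < x := lt_trans hA0 hx.1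
      rw [(hGderiv x hx0).deriv]
      have hf0 : 0 < f μ (x^2) := hpos x hx0.le
      have hrp : 0 < x ^ (-(μ+1/2)) := Real.rpow_pos_of_pos hx0 _
      have hρp : 0 < x ^ (2*μ+1) := Real.rpow_pos_of_pos hx0 _
      have hSn : 0 ≤ Real.sin (ω*(x-A)) := by
        apply Real.sin_nonneg_of_nonneg_of_le_pi
        · have : 0 ≤ x - A := by linarith [hx.1]
          positivity
        · have h1 : ω*(x-A) ≤ ω*(B-A) := by
            apply mul_le_mul_of_nonneg_left _ hω.le
            linarith [hx.2]
          have h2 : ω*(B-A) = π := by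
            rw [hBdef, hωdef]
            field_simp
            ring
          linarith
      have hbr : 0 ≤ 1 - ω^2 - (μ^2 - 1/4)/x^2 := by
        rw [hω2]
        have hx2 : (0:ℝ) < x^2 := by positivity
        have hxA : A ≤ x := hx.1.le
        have hdivle : (μ^2 - 1/4)/x^2 ≤ 1/2 := by
          rw [div_le_iff₀ hx2]
          nlinarith [hs2, hs2pos, hμ, hxA]
        linarith
      have hnn : 0 ≤ f μ (x^2) * (x ^ (-(μ+1/2)) * Real.sin (ω*(x-A)))
          * x ^ (2*μ+1) * (1 - ω^2 - (μ^2 - 1/4)/x^2) :=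
        mul_nonneg (mul_nonneg (mul_nonneg hf0.le (mul_nonneg hrp.le hSn)) hρp.le) hbr
      nlinarith [hnn]
  have hGA : G A < 0 := by
    have hfA : 0 < f μ (A^2) := hpos A hA0.le
    have hrpA : 0 < A ^ (-(μ+1/2)) := Real.rpow_pos_of_pos hA0 _
    have hρA : 0 < A ^ (2*μ+1) := Real.rpow_pos_of_pos hA0 _
    have e0 : ω * (A - A) = 0 := by ring
    rw [hGdef]
    show A ^ (2*μ+1) *
      ((-A * f (μ+1) (A^2)) * (A ^ (-(μ+1/2)) * Real.sin (ω*(A-A)))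
        - f μ (A^2) * (-(μ+1/2) * A ^ (-(μ+1/2)-1) * Real.sin (ω*(A-A))
            + A ^ (-(μ+1/2)) * (Real.cos (ω*(A-A)) * ω))) < 0
    rw [e0, Real.sin_zero, Real.cos_zero]
    have heq : A ^ (2*μ+1) * ((-A * f (μ+1) (A^2)) * (A ^ (-(μ+1/2)) * 0)
        - f μ (A^2) * (-(μ+1/2) * A ^ (-(μ+1/2)-1) * 0 + A ^ (-(μ+1/2)) * (1 * ω)))
        = -(A ^ (2*μ+1) * (f μ (A^2) * (A ^ (-(μ+1/2)) * ω))) := by ring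
    rw [heq]
    have hfin : 0 < A ^ (2*μ+1) * (f μ (A^2) * (A ^ (-(μ+1/2)) * ω)) := by positivity
    linarith
  have hGB : 0 < G B := by
    have hB0 : 0 < B := lt_trans hA0 hAB
    have hfB : 0 < f μ (B^2) := hpos B hB0.le
    have hrpB : 0 < B ^ (-(μ+1/2)) := Real.rpow_pos_of_pos hB0 _
    have hρB : 0 < B ^ (2*μ+1) := Real.rpow_pos_of_pos hB0 _
    have hπ : ω*(B-A) = π := by
      rw [hBdef, hωdef]
      field_simp
      ring
    rw [hGdef]
    show 0 < B ^ (2*μ+1) *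
      ((-B * f (μ+1) (B^2)) * (B ^ (-(μ+1/2)) * Real.sin (ω*(B-A)))
        - f μ (B^2) * (-(μ+1/2) * B ^ (-(μ+1/2)-1) * Real.sin (ω*(B-A))
            + B ^ (-(μ+1/2)) * (Real.cos (ω*(B-A)) * ω)))
    rw [hπ, Real.sin_pi, Real.cos_pi]
    have heq : B ^ (2*μ+1) * ((-B * f (μ+1) (B^2)) * (B ^ (-(μ+1/2)) * 0)
        - f μ (B^2) * (-(μ+1/2) * B ^ (-(μ+1/2)-1) * 0 + B ^ (-(μ+1/2)) * (-1 * ω)))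
        = B ^ (2*μ+1) * (f μ (B^2) * (B ^ (-(μ+1/2)) * ω)) := by ring
    rw [heq]
    positivity
  have hle : G B ≤ G A := hmono ⟨le_refl A, hAB.le⟩ ⟨hAB.le, le_refl B⟩ hAB.le
  linarith

lemma Xi_zero_eq {d : ℕ} (hd : 2 ≤ d) {r : ℝ} (hr : 0 < r) :
    Xi d 0 r = f ((d:ℝ)/2 - 1) (r ^ 2) := by
  have h2d : (2:ℝ) ≤ (d:ℝ) := by exact_mod_cast hd
  have hν : 0 ≤ (d:ℝ)/2 - 1 := by linarith
  unfold Xi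
  rw [show ((0:ℕ):ℝ) + (d:ℝ)/2 - 1 = (d:ℝ)/2 - 1 by push_cast; ring]
  rw [besselJ_eq _ hν hr, ← mul_assoc, ← Real.rpow_add hr]
  rw [show ((2:ℝ) - d)/2 + ((d:ℝ)/2 - 1) = 0 by ring]
  rw [Real.rpow_zero, one_mul]

lemma Xi_one_eq {d : ℕ} (hd : 2 ≤ d) {r : ℝ} (hr : 0 < r) :
    Xi d 1 r = r * f ((d:ℝ)/2) (r ^ 2) := by
  have h2d : (2:ℝ) ≤ (d:ℝ) := by exact_mod_cast hd
  have hν : 0 ≤ (d:ℝ)/2 := by linarith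
  unfold Xi
  rw [show ((1:ℕ):ℝ) + (d:ℝ)/2 - 1 = (d:ℝ)/2 by push_cast; ring]
  rw [besselJ_eq _ hν hr, ← mul_assoc, ← Real.rpow_add hr]
  rw [show ((2:ℝ) - d)/2 + (d:ℝ)/2 = 1 by ring]
  rw [Real.rpow_one]

lemma deriv_Xi_zero {d : ℕ} (hd : 2 ≤ d) {r : ℝ} (hr : 0 < r) :
    deriv (Xi d 0) r = -(r * f ((d:ℝ)/2) (r ^ 2)) := by
  have h2d : (2:ℝ) ≤ (d:ℝ) := by exact_mod_cast hd
  have hν : 0 ≤ (d:ℝ)/2 - 1 := by linarith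
  have hev : Xi d 0 =ᶠ[𝓝 r] (fun x => f ((d:ℝ)/2 - 1) (x ^ 2)) := by
    filter_upwards [IsOpen.mem_nhds isOpen_Ioi hr] with x hx
    exact Xi_zero_eq hd hx
  rw [hev.deriv_eq]
  have h := fsq_hasDerivAt ((d:ℝ)/2 - 1) hν r
  rw [show (d:ℝ)/2 - 1 + 1 = (d:ℝ)/2 by ring] at h
  rw [h.deriv]
  ring

end BesselAux

theorem neumann_beta_one_one_lt_beta_zero_two (d : ℕ) (hd : 2 ≤ d) :
    sInf {r : ℝ | 0 < r ∧ deriv (Xi d 1) r = 0} <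
      sInf {r : ℝ | 0 < r ∧ deriv (Xi d 0) r = 0} := by
  have h2d : (2:ℝ) ≤ (d:ℝ) := by exact_mod_cast hd
  have hμ1 : (1:ℝ) ≤ (d:ℝ)/2 := by linarith
  have hμ0 : (0:ℝ) ≤ (d:ℝ)/2 := by linarith
  have hS2 : {r : ℝ | 0 < r ∧ deriv (Xi d 0) r = 0}
      = {r : ℝ | 0 < r ∧ BesselAux.f ((d:ℝ)/2) (r^2) = 0} := by
    ext r
    simp only [Set.mem_setOf_eq]
    constructor
    · rintro ⟨hr, hz⟩
      refine ⟨hr, ?_⟩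
      rw [BesselAux.deriv_Xi_zero hd hr] at hz
      have h' := neg_eq_zero.1 hz
      rcases mul_eq_zero.1 h' with h | h
      · exact absurd h hr.ne'
      · exact h
    · rintro ⟨hr, hz⟩
      exact ⟨hr, by rw [BesselAux.deriv_Xi_zero hd hr, hz, mul_zero, neg_zero]⟩
  obtain ⟨z, hz0, hzz⟩ := BesselAux.exists_fzero ((d:ℝ)/2) hμ1
  have hZne : {r : ℝ | 0 < r ∧ BesselAux.f ((d:ℝ)/2) (r^2) = 0}.Nonempty := ⟨z, hz0, hzz⟩
  have hcont : Continuous (fun t : ℝ => BesselAux.f ((d:ℝ)/2) (t^2)) :=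
    (BesselAux.f_continuous _ hμ0).comp (continuous_pow 2)
  have h00 : 0 < BesselAux.f ((d:ℝ)/2) ((0:ℝ)^2) := by
    rw [show ((0:ℝ)^2) = 0 by norm_num, BesselAux.f_zero_val _ hμ0]
    exact BesselAux.a_pos_zero _ hμ0
  have hnhds : {x : ℝ | 0 < BesselAux.f ((d:ℝ)/2) (x^2)} ∈ 𝓝 (0:ℝ) :=
    hcont.continuousAt.preimage_mem_nhds (Ioi_mem_nhds h00)
  obtain ⟨δ, hδpos, hδ⟩ := Metric.mem_nhds_iff.mp hnhds
  have hZsub : ∀ r ∈ {r : ℝ | 0 < r ∧ BesselAux.f ((d:ℝ)/2) (r^2) = 0}, δ ≤ r := by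
    rintro r ⟨hr, hfr⟩
    by_contra hlt
    push_neg at hlt
    have : r ∈ Metric.ball (0:ℝ) δ := by
      rw [Metric.mem_ball, Real.dist_eq, sub_zero, abs_of_pos hr]
      exact hlt
    have := hδ this
    rw [Set.mem_setOf_eq, hfr] at this
    exact lt_irrefl 0 this
  have hZW : {r : ℝ | 0 < r ∧ BesselAux.f ((d:ℝ)/2) (r^2) = 0}
      = Set.Ici δ ∩ (fun t : ℝ => BesselAux.f ((d:ℝ)/2) (t^2)) ⁻¹' {0} := by
    ext r
    constructor
    · intro hr
      exact ⟨hZsub r hr, hr.2⟩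
    · rintro ⟨h1, h2⟩
      exact ⟨lt_of_lt_of_le hδpos h1, h2⟩
  have hWclosed : IsClosed (Set.Ici δ ∩ (fun t : ℝ => BesselAux.f ((d:ℝ)/2) (t^2)) ⁻¹' {0}) :=
    isClosed_Ici.inter (isClosed_singleton.preimage hcont)
  have hbddZ : BddBelow {r : ℝ | 0 < r ∧ BesselAux.f ((d:ℝ)/2) (r^2) = 0} :=
    ⟨δ, hZsub⟩
  have hjmem : sInf {r : ℝ | 0 < r ∧ BesselAux.f ((d:ℝ)/2) (r^2) = 0}
      ∈ {r : ℝ | 0 < r ∧ BesselAux.f ((d:ℝ)/2) (r^2) = 0} := by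
    rw [hZW]
    rw [hZW] at hZne hbddZ
    exact hWclosed.csInf_mem hZne hbddZ
  set j : ℝ := sInf {r : ℝ | 0 < r ∧ BesselAux.f ((d:ℝ)/2) (r^2) = 0} with hjdef
  have hj0 : 0 < j := hjmem.1
  have hgc : Continuous (fun x : ℝ => x * BesselAux.f ((d:ℝ)/2) (x^2)) :=
    continuous_id.mul hcont
  have hends : (fun x : ℝ => x * BesselAux.f ((d:ℝ)/2) (x^2)) 0
      = (fun x : ℝ => x * BesselAux.f ((d:ℝ)/2) (x^2)) j := by
    simp only [zero_mul]
    rw [hjmem.2, mul_zero]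
  obtain ⟨c, hc, hderivc⟩ := exists_deriv_eq_zero hj0 hgc.continuousOn hends
  have hXg : Xi d 1 =ᶠ[𝓝 c] (fun x : ℝ => x * BesselAux.f ((d:ℝ)/2) (x^2)) := by
    filter_upwards [IsOpen.mem_nhds isOpen_Ioi hc.1] with x hx
    exact BesselAux.Xi_one_eq hd hx
  have hc1 : c ∈ {r : ℝ | 0 < r ∧ deriv (Xi d 1) r = 0} :=
    ⟨hc.1, by rw [hXg.deriv_eq]; exact hderivc⟩
  have hbdd1 : BddBelow {r : ℝ | 0 < r ∧ deriv (Xi d 1) r = 0} :=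
    ⟨0, fun x hx => hx.1.le⟩
  calc sInf {r : ℝ | 0 < r ∧ deriv (Xi d 1) r = 0} ≤ c := csInf_le hbdd1 hc1
  _ < j := hc.2
  _ = sInf {r : ℝ | 0 < r ∧ deriv (Xi d 0) r = 0} := by rw [hjdef, hS2]
end

section
/- For every real number x > 2, one has ( Γ((x+1)/2) / Γ(x/2) )² ≤ (x-1)² / (2(x-2)), where Γ is the real Gamma function. Equivalently, Γ((x+1)/2)² · 2(x-2) ≤ Γ(x/2)² · (x-1)². -/
theorem gamma_quotient_bound (x : ℝ) (hx : 2 < x) :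
    (Real.Gamma ((x + 1) / 2) / Real.Gamma (x / 2)) ^ 2 ≤ (x - 1) ^ 2 / (2 * (x - 2)) := by
  set a := x / 2 with ha
  have ha0 : 0 < a := by rw [ha]; linarith
  have hb0 : (0:ℝ) < a + 1 := by linarith
  have hΓa : 0 < Real.Gamma a := Real.Gamma_pos_of_pos ha0
  have hm0 : (0:ℝ) < (x + 1) / 2 := by linarith
  have hΓm : 0 < Real.Gamma ((x + 1) / 2) := Real.Gamma_pos_of_pos hm0
  have hconv := Real.convexOn_log_Gamma.2 (Set.mem_Ioi.2 ha0) (Set.mem_Ioi.2 hb0)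
    (by norm_num : (0:ℝ) ≤ 1/2) (by norm_num : (0:ℝ) ≤ 1/2) (by norm_num)
  simp only [Function.comp_apply, smul_eq_mul] at hconv
  rw [Real.Gamma_add_one (ne_of_gt ha0)] at hconv
  rw [show (1/2 : ℝ) * a + 1/2 * (a + 1) = (x + 1) / 2 by rw [ha]; ring] at hconv
  have hconv' : Real.log (Real.Gamma ((x + 1) / 2)) ≤
      Real.log (Real.Gamma a) + 1/2 * Real.log a := by
    rw [Real.log_mul (ne_of_gt ha0) (ne_of_gt hΓa)] at hconv
    linarith
  have hkey : Real.Gamma ((x + 1) / 2) ^ 2 ≤ Real.Gamma a ^ 2 * a := by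
    rw [← Real.log_le_log_iff (by positivity) (by positivity),
      Real.log_pow, Real.log_mul (by positivity) (ne_of_gt ha0), Real.log_pow]
    push_cast
    linarith
  have h1 : (Real.Gamma ((x + 1) / 2) / Real.Gamma a) ^ 2 ≤ a := by
    rw [div_pow, div_le_iff₀ (by positivity)]
    linarith [hkey]
  refine h1.trans ?_
  rw [ha, div_le_div_iff₀ (by norm_num) (by linarith)]
  nlinarith
end
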